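/- For every natural number N ≥ 2, there is no element c of ZMod N satisfying both c·(c+1) = 0 and 2·c + 1 = 0. (Consequently, for the Taft algebra at an N-th root of unity with N > 1, no twisted pivotal structure can have its underlying invertible object square to the distinguished invertible object T_{N−1}.) -/

import Mathlib

/-- `(2c + 1)² = 4c(c + 1) + 1`, so `2c + 1` cannot vanish together with `c(c + 1)`. -/
theorem one_eq_zero_of_mul_add_one_eq_zero_of_two_mul_add_one_eq_zero {R : Type*} [CommRing R]
    {c : R} (hprod : c * (c + 1) = 0) (hodd : 2 * c + 1 = 0) : (1 : R) = 0 := by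
  linear_combination -4 * hprod + (2 * c + 1) * hodd

/-- For every natural number `N ≥ 2`, there is no `c : ZMod N` satisfying both
`c·(c+1) = 0` and `2·c + 1 = 0`.  (Consequently, for the Taft algebra at an `N`-th
root of unity with `N > 1`, no twisted pivotal structure can have its underlying
invertible object square to the distinguished invertible object `T_{N-1}`.) -/
theorem taft_no_twisted_pivotal_squaring_to_distinguished
    (N : ℕ) (hN : 2 ≤ N) :
    ¬ ∃ c : ZMod N, c * (c + 1) = 0 ∧ 2 * c + 1 = 0 := by
  rintro ⟨c, hprod, hodd⟩
  have : Fact (1 < N) := ⟨hN⟩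
  exact one_ne_zero (one_eq_zero_of_mul_add_one_eq_zero_of_two_mul_add_one_eq_zero hprod hodd)
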